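/- Let G be a nice d-regular finite simple graph on n vertices with d ≥ 2. Then ls_σ^e(G) ≤ ⌈(2e(d+1)(n−d))^{1/(d−1)}⌉, where e is Euler's number: for k = ⌈(2e(d+1)(n−d))^{1/(d−1)}⌉, for every linear order on E(G) and every assignment to each edge of a set of k real numbers, there exists a weighting taking each edge's weight from its assigned set such that all vertices of G receive pairwise distinct induced sequences. -/

import Mathlib

/-!
Common definitions: sequence colourings induced by an edge weighting and a linear
order on the edge set of a finite simple graph.
-/

open Finset

variable {V : Type*}

/-- The list of edges incident to `v`, sorted in increasing order with respect to the
linear order `σ` on `E(G)`. -/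
noncomputable def incEdges [Fintype V] [DecidableEq V] (G : SimpleGraph V) [DecidableRel G.Adj]
    (σ : LinearOrder G.edgeSet) (v : V) : List G.edgeSet :=
  letI := σ
  ((Finset.univ : Finset G.edgeSet).filter (fun e : G.edgeSet => v ∈ (e : Sym2 V))).sort σ.le

/-- The induced sequence colouring: `c(v)` is the list of weights `w(e)` of the edges `e`
incident to `v`, written in increasing order of `e` with respect to `σ`. -/
noncomputable def seqColor [Fintype V] [DecidableEq V] (G : SimpleGraph V) [DecidableRel G.Adj]
    (σ : LinearOrder G.edgeSet) {α : Type*} (w : G.edgeSet → α) (v : V) : List α :=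
  (incEdges G σ v).map w

/-- The induced sequence colouring is proper: adjacent vertices receive distinct sequences. -/
def ProperSeq [Fintype V] [DecidableEq V] (G : SimpleGraph V) [DecidableRel G.Adj]
    (σ : LinearOrder G.edgeSet) (w : G.edgeSet → ℝ) : Prop :=
  ∀ u v : V, G.Adj u v → seqColor G σ w u ≠ seqColor G σ w v

/-- A graph is nice if no connected component is isomorphic to `K₂`; equivalently,
no edge has both of its endpoints of degree `1`. -/
def Nice [Fintype V] [DecidableEq V] (G : SimpleGraph V) [DecidableRel G.Adj] : Prop :=
  ∀ u v : V, G.Adj u v → 2 ≤ G.degree u ∨ 2 ≤ G.degree v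

/-!
For distinct vertices `u, v` of a `d`-regular graph, equality of the sequences at `u` and `v`
determines the weights of the at least `d - 1` edges at `u` but not at `v` from all other weights
(each such edge sits at the same position in the list at `u` as some edge at `v`). So a uniformly
random weighting from lists of size `k` makes the sequences at `u` and `v` equal with probability
at most `k^{-(d-1)} ≤ 1 / (2e(d+1)(n-d))`. This event depends only on the weights of edges meeting
`{u, v}`, so it is mutually independent of all pair events avoiding the closed neighbourhood
of `{u, v}`; fewer than `2(d+1)(n-d)` pairs meet that neighbourhood once `n ≥ 2d + 2`, and the
symmetric Lovász Local Lemma, in its counting form on the product of the lists, gives a weighting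
with no equal pair. For `n ≤ 2d + 1` there are already fewer than `k^{d-1}` pairs and the union
bound suffices.
-/

open Fintype

theorem inv_exp_mul_le_mul_one_sub_pow (Δ : ℕ) :
    (Real.exp 1 * (Δ + 1))⁻¹ ≤ (Δ + 2 : ℝ)⁻¹ * (1 - (Δ + 2 : ℝ)⁻¹) ^ Δ := by
  set m : ℝ := Δ + 1
  have hm : 0 < m := by positivity
  have hexp : (1 + m⁻¹) ^ (Δ + 1) ≤ Real.exp 1 :=
    calc (1 + m⁻¹) ^ (Δ + 1) ≤ Real.exp m⁻¹ ^ (Δ + 1) := by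
          gcongr; linarith [Real.add_one_le_exp m⁻¹]
      _ = Real.exp 1 := by rw [← Real.exp_nat_mul, Nat.cast_succ, mul_inv_cancel₀ hm.ne']
  have hrhs : (Δ + 2 : ℝ)⁻¹ * (1 - (Δ + 2 : ℝ)⁻¹) ^ Δ = ((1 + m⁻¹) ^ (Δ + 1))⁻¹ * m⁻¹ := by
    rw [show (Δ + 2 : ℝ) = m + 1 by ring, show 1 + m⁻¹ = (m + 1) / m by field_simp,
      show 1 - (m + 1)⁻¹ = m / (m + 1) by field_simp; ring]
    rw [← inv_pow, inv_div, pow_succ]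
    field_simp
  rw [hrhs, mul_inv]
  gcongr

theorem card_mul_prod_card_le_card_piFinset {ι α : Type*} [Fintype ι] [DecidableEq ι]
    (A : ι → Finset α) (s : Finset ι) {B : Finset (ι → α)} (hB : B ⊆ piFinset A)
    (hinj : ∀ f ∈ B, ∀ g ∈ B, (∀ i ∉ s, f i = g i) → f = g) :
    #B * ∏ i ∈ s, #(A i) ≤ #(piFinset A) := by
  rcases B.eq_empty_or_nonempty with rfl | ⟨f₀, hf₀⟩
  · simp
  -- overwriting the `s`-coordinates by those of `f₀` is injective on `B`
  set A' : ι → Finset α := fun i => if i ∈ s then {f₀ i} else A i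
  have hmaps : Set.MapsTo (fun f => s.piecewise f₀ f) B (piFinset A') := by
    intro f hf
    rw [mem_coe, mem_piFinset] at *
    intro i
    by_cases hi : i ∈ s <;> simp [A', hi, mem_piFinset.1 (hB hf) i]
  have hinjOn : Set.InjOn (fun f => s.piecewise f₀ f) B := fun f hf g hg hfg =>
    hinj f hf g hg fun i hi => by
      simpa [piecewise_eq_of_notMem _ _ _ hi] using congrFun hfg i
  have hA' : #(piFinset A') = ∏ i ∈ sᶜ, #(A i) := by
    have hs : ∏ i ∈ s, #(A' i) = 1 := prod_eq_one fun i hi => by simp [A', hi]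
    rw [card_piFinset, ← prod_mul_prod_compl s, hs, one_mul]
    exact Finset.prod_congr rfl fun i hi => by simp [A', mem_compl.1 hi]
  calc #B * ∏ i ∈ s, #(A i) ≤ #(piFinset A') * ∏ i ∈ s, #(A i) :=
        Nat.mul_le_mul_right _ (card_le_card_of_injOn _ hmaps hinjOn)
    _ = #(piFinset A) := by rw [hA', mul_comm, prod_mul_prod_compl, card_piFinset]

section LocalLemma

variable {ι α κ : Type*} [Fintype ι] [DecidableEq ι]

theorem card_filter_and_mul_card_piFinset (A : ι → Finset α) {s t : Finset ι}
    (hst : Disjoint s t) {P Q : (ι → α) → Prop} [DecidablePred P] [DecidablePred Q]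
    (hP : DependsOn P s) (hQ : DependsOn Q t) :
    #{f ∈ piFinset A | P f ∧ Q f} * #(piFinset A)
      = #{f ∈ piFinset A | P f} * #{f ∈ piFinset A | Q f} := by
  have hpw : ∀ {f g}, f ∈ piFinset A → g ∈ piFinset A → s.piecewise f g ∈ piFinset A := by
    intro f g hf hg
    rw [mem_piFinset] at *
    intro i
    by_cases hi : i ∈ s <;> simp [hi, hf i, hg i]
  have hs : ∀ f g : ι → α, ∀ i ∈ (s : Set ι), s.piecewise f g i = f i :=
    fun f g i hi => piecewise_eq_of_mem _ _ _ hi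
  have ht : ∀ f g : ι → α, ∀ i ∈ (t : Set ι), s.piecewise f g i = g i :=
    fun f g i hi => piecewise_eq_of_notMem _ _ _ (disjoint_right.1 hst hi)
  have hinv : ∀ f g : ι → α, s.piecewise (s.piecewise f g) (s.piecewise g f) = f := by
    intro f g; ext i; by_cases hi : i ∈ s <;> simp [hi]
  -- swapping the `s`-coordinates of a pair is an involution of `Ω × Ω`
  rw [← card_product, ← card_product]
  refine card_nbij' (fun fg => (s.piecewise fg.1 fg.2, s.piecewise fg.2 fg.1))
    (fun fg => (s.piecewise fg.1 fg.2, s.piecewise fg.2 fg.1)) ?_ ?_ ?_ ?_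
  · rintro ⟨f, g⟩ hfg
    simp only [coe_product, coe_filter, Set.mem_prod, Set.mem_ofPred_eq, mem_coe] at hfg ⊢
    exact ⟨⟨hpw hfg.1.1 hfg.2, hP (hs f g) ▸ hfg.1.2.1⟩,
      hpw hfg.2 hfg.1.1, hQ (ht g f) ▸ hfg.1.2.2⟩
  · rintro ⟨f, g⟩ hfg
    simp only [coe_product, coe_filter, Set.mem_prod, Set.mem_ofPred_eq, mem_coe] at hfg ⊢
    exact ⟨⟨hpw hfg.1.1 hfg.2.1, hP (hs f g) ▸ hfg.1.2, hQ (ht f g) ▸ hfg.2.2⟩,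
      hpw hfg.2.1 hfg.1.1⟩
  · rintro ⟨f, g⟩ -
    simp [hinv]
  · rintro ⟨f, g⟩ -
    simp [hinv]

variable (A : ι → Finset α) (bad : κ → (ι → α) → Prop) [∀ j, DecidablePred (bad j)]

def avoiding (T : Finset κ) : Finset (ι → α) :=
  {f ∈ piFinset A | ∀ j ∈ T, ¬ bad j f}

variable {A bad}

theorem avoiding_anti {T T' : Finset κ} (h : T ⊆ T') : avoiding A bad T' ⊆ avoiding A bad T :=
  monotone_filter_right _ fun _ _ hf j hj => hf j (h hj)

theorem card_filter_avoiding_le_of_disjoint {vbl : κ → Finset ι}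
    (hloc : ∀ j, DependsOn (bad j) (vbl j)) {p : ℝ} {j : κ}
    (hp : #{f ∈ piFinset A | bad j f} ≤ p * #(piFinset A)) {T : Finset κ}
    (hT : ∀ j' ∈ T, Disjoint (vbl j) (vbl j')) :
    #{f ∈ avoiding A bad T | bad j f} ≤ p * #(avoiding A bad T) := by
  have hdisj : Disjoint (T.biUnion vbl) (vbl j) :=
    (disjoint_biUnion_left _ _ _).2 fun j' hj' => (hT j' hj').symm
  have hP : DependsOn (fun f => ∀ j' ∈ T, ¬ bad j' f) (T.biUnion vbl) := by
    intro f g hfg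
    refine propext (forall₂_congr fun j' hj' => not_congr (iff_of_eq (hloc j' fun i hi => ?_)))
    exact hfg i (by simpa using ⟨j', hj', hi⟩)
  have hind := card_filter_and_mul_card_piFinset A hdisj hP (hloc j)
  rw [← filter_filter] at hind
  change #{f ∈ avoiding A bad T | bad j f} * _ = #(avoiding A bad T) * _ at hind
  rcases (piFinset A).eq_empty_or_nonempty with hΩ | hΩ
  · simp [avoiding, hΩ]
  have hΩpos : (0 : ℝ) < #(piFinset A) := by exact_mod_cast hΩ.card_pos
  refine le_of_mul_le_mul_right ?_ hΩpos
  calc (#{f ∈ avoiding A bad T | bad j f} : ℝ) * #(piFinset A)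
      = #(avoiding A bad T) * #{f ∈ piFinset A | bad j f} := by exact_mod_cast hind
    _ ≤ #(avoiding A bad T) * (p * #(piFinset A)) := by gcongr
    _ = p * #(avoiding A bad T) * #(piFinset A) := by ring

variable [DecidableEq κ]

theorem avoiding_insert (a : κ) (T : Finset κ) :
    avoiding A bad (insert a T) = {f ∈ avoiding A bad T | ¬ bad a f} := by
  ext f
  simp only [avoiding, mem_filter, forall_mem_insert]
  tauto

theorem one_sub_mul_card_avoiding_le {x : ℝ} {a : κ} {T : Finset κ}
    (h : #{f ∈ avoiding A bad T | bad a f} ≤ x * #(avoiding A bad T)) :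
    (1 - x) * #(avoiding A bad T) ≤ #(avoiding A bad (insert a T)) := by
  have hsplit := card_filter_add_card_filter_not (s := avoiding A bad T) (bad a)
  rw [avoiding_insert]
  have : (#(avoiding A bad T) : ℝ) = #{f ∈ avoiding A bad T | bad a f}
      + #{f ∈ avoiding A bad T | ¬ bad a f} := by exact_mod_cast hsplit.symm
  linarith

theorem pow_mul_card_avoiding_le {x : ℝ} (hx : x ≤ 1) (R S : Finset κ)
    (h : ∀ T ⊆ S, ∀ a ∈ S \ T,
      #{f ∈ avoiding A bad (R ∪ T) | bad a f} ≤ x * #(avoiding A bad (R ∪ T))) :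
    (1 - x) ^ #S * #(avoiding A bad R) ≤ #(avoiding A bad (R ∪ S)) := by
  induction S using Finset.induction_on with
  | empty => simp
  | insert a S ha ih =>
    have hS : S ⊆ insert a S := subset_insert a S
    calc (1 - x) ^ #(insert a S) * #(avoiding A bad R)
        = (1 - x) * ((1 - x) ^ #S * #(avoiding A bad R)) := by
          rw [card_insert_of_notMem ha]; ring
      _ ≤ (1 - x) * #(avoiding A bad (R ∪ S)) :=
          mul_le_mul_of_nonneg_left
            (ih fun T hT a ha => h T (hT.trans hS) a (sdiff_subset_sdiff hS subset_rfl ha))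
            (by linarith)
      _ ≤ #(avoiding A bad (R ∪ insert a S)) := by
          rw [union_insert]
          exact one_sub_mul_card_avoiding_le (h S hS a (by simp [ha]))

theorem card_filter_avoiding_le_of_dependency {vbl : κ → Finset ι}
    (hloc : ∀ j, DependsOn (bad j) (vbl j)) {J : Finset κ} {p x : ℝ} {Δ : ℕ}
    (hp : ∀ j ∈ J, #{f ∈ piFinset A | bad j f} ≤ p * #(piFinset A))
    (hdep : ∀ j ∈ J, #{j' ∈ J.erase j | ¬ Disjoint (vbl j) (vbl j')} ≤ Δ)
    (hx0 : 0 ≤ x) (hx1 : x ≤ 1) (hpx : p ≤ x * (1 - x) ^ Δ) :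
    ∀ T ⊆ J, ∀ j ∈ J \ T, #{f ∈ avoiding A bad T | bad j f} ≤ x * #(avoiding A bad T) := by
  intro T
  induction T using Finset.strongInduction with
  | H T ih =>
  intro hTJ j hj
  rw [mem_sdiff] at hj
  set T₁ := {j' ∈ T | ¬ Disjoint (vbl j) (vbl j')}
  set T₂ := {j' ∈ T | Disjoint (vbl j) (vbl j')}
  have hT : T₂ ∪ T₁ = T := filter_union_filter_not_eq _ _
  have hT₁ : #T₁ ≤ Δ := by
    refine (card_le_card fun j' hj' => ?_).trans (hdep j hj.1)
    simp only [T₁, mem_filter, mem_erase] at hj' ⊢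
    exact ⟨⟨fun h => hj.2 (h ▸ hj'.1), hTJ hj'.1⟩, hj'.2⟩
  have hpeel : (1 - x) ^ #T₁ * #(avoiding A bad T₂) ≤ #(avoiding A bad T) := by
    refine hT ▸ pow_mul_card_avoiding_le hx1 T₂ T₁ fun T' hT' a ha => ?_
    rw [mem_sdiff] at ha
    have haT : a ∈ T := filter_subset _ _ ha.1
    have hsub : T₂ ∪ T' ⊆ T := union_subset (filter_subset _ _) (hT'.trans (filter_subset _ _))
    have haT' : a ∉ T₂ ∪ T' := by
      simp only [mem_union, T₂, mem_filter, not_or]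
      exact ⟨fun h => (mem_filter.1 ha.1).2 h.2, ha.2⟩
    exact ih _ (ssubset_of_subset_of_ne hsub fun h => haT' (h ▸ haT)) (hsub.trans hTJ) a
      (mem_sdiff.2 ⟨hTJ haT, haT'⟩)
  calc (#{f ∈ avoiding A bad T | bad j f} : ℝ)
      ≤ #{f ∈ avoiding A bad T₂ | bad j f} := by
        exact_mod_cast card_le_card (filter_subset_filter _ (avoiding_anti (filter_subset _ _)))
    _ ≤ p * #(avoiding A bad T₂) :=
        card_filter_avoiding_le_of_disjoint hloc (hp j hj.1) fun j' hj' => (mem_filter.1 hj').2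
    _ ≤ x * (1 - x) ^ Δ * #(avoiding A bad T₂) := by gcongr
    _ ≤ x * (1 - x) ^ #T₁ * #(avoiding A bad T₂) := by
        gcongr x * ?_ * _
        exact pow_le_pow_of_le_one (by linarith) (by linarith) hT₁
    _ ≤ x * #(avoiding A bad T) := by rw [mul_assoc]; gcongr

theorem exists_mem_piFinset_forall_not_of_exp_mul_le (hA : ∀ i, (A i).Nonempty)
    {vbl : κ → Finset ι} (hloc : ∀ j, DependsOn (bad j) (vbl j)) {J : Finset κ} {p : ℝ} {Δ : ℕ}
    (hp : ∀ j ∈ J, #{f ∈ piFinset A | bad j f} ≤ p * #(piFinset A))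
    (hdep : ∀ j ∈ J, #{j' ∈ J.erase j | ¬ Disjoint (vbl j) (vbl j')} ≤ Δ)
    (he : Real.exp 1 * p * (Δ + 1) ≤ 1) :
    ∃ f ∈ piFinset A, ∀ j ∈ J, ¬ bad j f := by
  -- rather than the textbook `1 / (Δ + 1)`, so that `x < 1` also when `Δ = 0`
  set x : ℝ := (Δ + 2 : ℝ)⁻¹
  have hx0 : 0 < x := by positivity
  have hx1 : x < 1 := inv_lt_one_of_one_lt₀ (by linarith [(Nat.cast_nonneg Δ : (0 : ℝ) ≤ Δ)])
  have hpx : p ≤ x * (1 - x) ^ Δ := by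
    refine le_trans ?_ (inv_exp_mul_le_mul_one_sub_pow Δ)
    rw [← one_div, le_div_iff₀ (by positivity)]
    linarith
  have hkey := card_filter_avoiding_le_of_dependency hloc hp hdep hx0.le hx1.le hpx
  have hchain := pow_mul_card_avoiding_le hx1.le ∅ J fun T hT a ha => by
    simpa using hkey T hT a ha
  have hΩ : (0 : ℝ) < #(piFinset A) := by
    exact_mod_cast (piFinset_nonempty.2 hA).card_pos
  have hpos : (0 : ℝ) < #(avoiding A bad J) := by
    simp only [avoiding, empty_union, notMem_empty, false_imp_iff, imp_true_iff,
      filter_true_of_mem] at hchain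
    exact (mul_pos (pow_pos (by linarith) _) hΩ).trans_le hchain
  obtain ⟨f, hf⟩ := card_pos.1 (by exact_mod_cast hpos)
  exact ⟨f, (mem_filter.1 hf).1, (mem_filter.1 hf).2⟩

end LocalLemma

theorem exists_mem_forall_not_of_card_mul_lt {β κ : Type*} [DecidableEq β] {Ω : Finset β}
    (hΩ : Ω.Nonempty) {bad : κ → β → Prop} [∀ j, DecidablePred (bad j)] {J : Finset κ} {p : ℝ}
    (hp : ∀ j ∈ J, #{f ∈ Ω | bad j f} ≤ p * #Ω) (hJ : #J * p < 1) :
    ∃ f ∈ Ω, ∀ j ∈ J, ¬ bad j f := by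
  by_contra! h
  have hcover : Ω ⊆ J.biUnion fun j => {f ∈ Ω | bad j f} := fun f hf => by
    obtain ⟨j, hj, hb⟩ := h f hf
    exact mem_biUnion.2 ⟨j, hj, mem_filter.2 ⟨hf, hb⟩⟩
  have hΩpos : (0 : ℝ) < #Ω := by exact_mod_cast hΩ.card_pos
  have : (#Ω : ℝ) ≤ #J * p * #Ω :=
    calc (#Ω : ℝ) ≤ ∑ j ∈ J, (#{f ∈ Ω | bad j f} : ℝ) := by
          exact_mod_cast (card_le_card hcover).trans card_biUnion_le
      _ ≤ ∑ j ∈ J, p * #Ω := sum_le_sum hp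
      _ = #J * p * #Ω := by rw [sum_const, nsmul_eq_mul, mul_assoc]
  nlinarith

section SequenceColouring

variable [Fintype V] [DecidableEq V] {G : SimpleGraph V} [DecidableRel G.Adj]
  {σ : LinearOrder G.edgeSet}

theorem mem_incEdges {v : V} {e : G.edgeSet} : e ∈ incEdges G σ v ↔ v ∈ (e : Sym2 V) := by
  let _ := σ
  simp [incEdges]

theorem card_filter_mem_edge (v : V) : #{e : G.edgeSet | v ∈ (e : Sym2 V)} = G.degree v := by
  rw [← G.card_incidenceFinset_eq_degree, ← card_map (Function.Embedding.subtype _)]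
  congr 1
  ext e
  simp [SimpleGraph.incidenceSet, and_comm]

theorem length_incEdges (v : V) : (incEdges G σ v).length = G.degree v := by
  let _ := σ
  rw [incEdges, length_sort, card_filter_mem_edge]

theorem degree_sub_one_le_card_filter {u v : V} (huv : u ≠ v) :
    G.degree u - 1 ≤ #{e : G.edgeSet | u ∈ (e : Sym2 V) ∧ v ∉ (e : Sym2 V)} := by
  have hboth : #{e : G.edgeSet | u ∈ (e : Sym2 V) ∧ v ∈ (e : Sym2 V)} ≤ 1 :=
    card_le_one.2 fun a ha b hb => Subtype.ext <| by
      rw [mem_filter] at ha hb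
      rw [(Sym2.mem_and_mem_iff huv).1 ha.2, (Sym2.mem_and_mem_iff huv).1 hb.2]
  have hsplit := card_filter_add_card_filter_not
    (s := {e : G.edgeSet | u ∈ (e : Sym2 V)}) fun e => v ∈ (e : Sym2 V)
  simp only [filter_filter, card_filter_mem_edge] at hsplit
  omega

theorem seqColor_congr {α : Type*} {w w' : G.edgeSet → α} {v : V}
    (h : ∀ e : G.edgeSet, v ∈ (e : Sym2 V) → w e = w' e) :
    seqColor G σ w v = seqColor G σ w' v :=
  List.map_congr_left fun e he => h e (mem_incEdges.1 he)

theorem eq_of_seqColor_eq {α : Type*} {u v : V} (hdeg : G.degree u = G.degree v)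
    {w w' : G.edgeSet → α} (hw : seqColor G σ w u = seqColor G σ w v)
    (hw' : seqColor G σ w' u = seqColor G σ w' v)
    (hoff : ∀ e : G.edgeSet, (u ∈ (e : Sym2 V) → v ∈ (e : Sym2 V)) → w e = w' e) : w = w' := by
  funext e
  by_cases he : u ∈ (e : Sym2 V) ∧ v ∉ (e : Sym2 V)
  swap
  · exact hoff e (not_and_not_right.1 he)
  -- `e` sits at the same position of `incEdges u` as some edge `f` at `v`
  obtain ⟨t, hte⟩ := List.mem_iff_getElem?.1 (mem_incEdges.2 he.1)
  have ht : t < (incEdges G σ v).length := by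
    rw [length_incEdges, ← hdeg, ← length_incEdges (σ := σ)]
    exact (List.getElem?_eq_some_iff.1 hte).1
  obtain ⟨f, htf⟩ : ∃ f, (incEdges G σ v)[t]? = some f := ⟨_, List.getElem?_eq_getElem ht⟩
  have hf : v ∈ (f : Sym2 V) := mem_incEdges.1 (List.mem_of_getElem? htf)
  have hsame : ∀ ww : G.edgeSet → α, seqColor G σ ww u = seqColor G σ ww v → ww e = ww f := by
    intro ww hww
    have := congrArg (·[t]?) hww
    simpa only [seqColor, List.getElem?_map, hte, htf, Option.map_some, Option.some.injEq]
      using this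
  rw [hsame w hw, hoff f fun _ => hf, hsame w' hw']

theorem card_filter_seqColor_eq_mul_pow_le {α : Type*} [DecidableEq α]
    (L : G.edgeSet → Finset α) {k : ℕ} (hk : 0 < k) (hL : ∀ e, #(L e) = k) {u v : V} (huv : u ≠ v)
    (hdeg : G.degree u = G.degree v) :
    #{w ∈ piFinset L | seqColor G σ w u = seqColor G σ w v} * k ^ (G.degree u - 1)
      ≤ #(piFinset L) := by
  set s : Finset G.edgeSet := {e | u ∈ (e : Sym2 V) ∧ v ∉ (e : Sym2 V)}
  have h := card_mul_prod_card_le_card_piFinset L s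
    (B := {w ∈ piFinset L | seqColor G σ w u = seqColor G σ w v}) (filter_subset _ _)
    fun f hf g hg hfg => by
    refine eq_of_seqColor_eq hdeg (mem_filter.1 hf).2 (mem_filter.1 hg).2 fun e he => hfg e ?_
    simpa [s] using he
  rw [Finset.prod_congr rfl fun e _ => hL e, prod_const] at h
  exact (Nat.mul_le_mul_left _
    (Nat.pow_le_pow_right hk (degree_sub_one_le_card_filter huv))).trans h

end SequenceColouring

theorem card_filter_powersetCard_not_disjoint_add {α : Type*} [Fintype α] [DecidableEq α]
    (m : ℕ) (S : Finset α) :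
    #{t ∈ powersetCard m (univ : Finset α) | ¬ Disjoint t S} + (Fintype.card α - #S).choose m
      = (Fintype.card α).choose m := by
  have h : {t ∈ powersetCard m (univ : Finset α) | Disjoint t S} = powersetCard m Sᶜ := by
    ext t
    simp [mem_powersetCard, subset_compl_iff_disjoint_right, and_comm]
  rw [← card_compl, ← card_powersetCard, ← h, add_comm, card_filter_add_card_filter_not,
    card_powersetCard, card_univ]

theorem choose_two_lt_choose_two_sub_add {d n : ℕ} (h : 2 * (d + 1) ≤ n) :
    n.choose 2 < (n - 2 * (d + 1)).choose 2 + 2 * (d + 1) * (n - d) := by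
  obtain ⟨m, rfl⟩ := Nat.exists_eq_add_of_le h
  rw [Nat.add_sub_cancel_left, show 2 * (d + 1) + m - d = m + d + 2 by omega,
    ← Nat.cast_lt (α := ℚ)]
  push_cast [Nat.cast_choose_two]
  nlinarith

section Dependency

variable [Fintype V] [DecidableEq V] (G : SimpleGraph V) [DecidableRel G.Adj]

def SeqColorConstOn (σ : LinearOrder G.edgeSet) {α : Type*} (s : Finset V)
    (w : G.edgeSet → α) : Prop :=
  ∀ a ∈ s, ∀ b ∈ s, seqColor G σ w a = seqColor G σ w b

noncomputable instance {σ : LinearOrder G.edgeSet} {α : Type*} [DecidableEq α] (s : Finset V) :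
    DecidablePred (SeqColorConstOn G σ (α := α) s) :=
  fun _ => by unfold SeqColorConstOn; infer_instance

def edgesMeeting (s : Finset V) : Finset G.edgeSet :=
  {e | ∃ a ∈ s, a ∈ (e : Sym2 V)}

def closedNbhdFinset (s : Finset V) : Finset V :=
  s.biUnion fun a => insert a (G.neighborFinset a)

variable {G} {σ : LinearOrder G.edgeSet} {α : Type*}

theorem seqColorConstOn_pair {u v : V} {w : G.edgeSet → α} :
    SeqColorConstOn G σ {u, v} w ↔ seqColor G σ w u = seqColor G σ w v := by
  simp only [SeqColorConstOn, mem_insert, mem_singleton, forall_eq_or_imp, forall_eq, true_and,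
    and_true]
  exact ⟨And.left, fun h => ⟨h, h.symm⟩⟩

theorem card_filter_seqColorConstOn_mul_pow_le [DecidableEq α] {d : ℕ}
    (hreg : G.IsRegularOfDegree d) (L : G.edgeSet → Finset α) {k : ℕ} (hk : 0 < k)
    (hL : ∀ e, #(L e) = k) {j : Finset V} (hj : #j = 2) :
    #{w ∈ piFinset L | SeqColorConstOn G σ j w} * k ^ (d - 1) ≤ #(piFinset L) := by
  obtain ⟨u, v, huv, rfl⟩ := card_eq_two.1 hj
  simp only [seqColorConstOn_pair]
  exact hreg u ▸ card_filter_seqColor_eq_mul_pow_le L hk hL huv (by rw [hreg u, hreg v])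

theorem dependsOn_seqColorConstOn (s : Finset V) :
    DependsOn (SeqColorConstOn G σ (α := α) s) (edgesMeeting G s) := by
  intro w w' h
  have key : ∀ a ∈ s, seqColor G σ w a = seqColor G σ w' a := fun a ha =>
    seqColor_congr fun e he => h e (by simpa [edgesMeeting] using ⟨a, ha, he⟩)
  exact propext <| forall₂_congr fun a ha => forall₂_congr fun b hb => by rw [key a ha, key b hb]

theorem not_disjoint_closedNbhdFinset {s t : Finset V}
    (h : ¬ Disjoint (edgesMeeting G s) (edgesMeeting G t)) :
    ¬ Disjoint t (closedNbhdFinset G s) := by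
  obtain ⟨e, hes, het⟩ := not_disjoint_iff.1 h
  simp only [edgesMeeting, mem_filter, mem_univ, true_and] at hes het
  obtain ⟨a, has, hae⟩ := hes
  obtain ⟨b, hbt, hbe⟩ := het
  refine not_disjoint_iff.2 ⟨b, hbt, mem_biUnion.2 ⟨a, has, ?_⟩⟩
  rcases eq_or_ne a b with rfl | hab
  · exact mem_insert_self _ _
  have hadj : G.Adj a b := by
    rw [← G.mem_edgeSet, ← (Sym2.mem_and_mem_iff hab).1 ⟨hae, hbe⟩]
    exact e.2
  exact mem_insert_of_mem ((G.mem_neighborFinset a b).2 hadj)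

theorem card_closedNbhdFinset_le {d : ℕ} (hreg : G.IsRegularOfDegree d) (s : Finset V) :
    #(closedNbhdFinset G s) ≤ #s * (d + 1) := by
  refine card_biUnion_le.trans (sum_le_card_nsmul _ _ _ fun a _ => ?_)
  exact (card_insert_le _ _).trans (by rw [G.card_neighborFinset_eq_degree, hreg a])

theorem card_filter_not_disjoint_edgesMeeting_lt {d : ℕ} (hreg : G.IsRegularOfDegree d)
    (hn : 2 * (d + 1) ≤ Fintype.card V) {j : Finset V} (hj : #j = 2) :
    #{j' ∈ (powersetCard 2 (univ : Finset V)).erase j |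
        ¬ Disjoint (edgesMeeting G j) (edgesMeeting G j')}
      < 2 * (d + 1) * (Fintype.card V - d) := by
  set N := closedNbhdFinset G j
  have hsub : {j' ∈ (powersetCard 2 (univ : Finset V)).erase j |
        ¬ Disjoint (edgesMeeting G j) (edgesMeeting G j')}
      ⊆ {j' ∈ powersetCard 2 (univ : Finset V) | ¬ Disjoint j' N} :=
    fun j' hj' => by
      rw [mem_filter] at hj' ⊢
      exact ⟨mem_of_mem_erase hj'.1, not_disjoint_closedNbhdFinset hj'.2⟩
  have hN : #N ≤ 2 * (d + 1) := hj ▸ card_closedNbhdFinset_le hreg j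
  have hcount := card_filter_powersetCard_not_disjoint_add 2 N
  have hmono : (Fintype.card V - 2 * (d + 1)).choose 2 ≤ (Fintype.card V - #N).choose 2 :=
    Nat.choose_le_choose 2 (by omega)
  have := choose_two_lt_choose_two_sub_add hn
  have := card_le_card hsub
  linarith

end Dependency

theorem le_natCeil_rpow_inv_pow {X : ℝ} (hX : 0 ≤ X) {m : ℕ} (hm : m ≠ 0) :
    X ≤ (⌈X ^ ((1 : ℝ) / m)⌉₊ : ℝ) ^ m :=
  calc X = (X ^ ((1 : ℝ) / m)) ^ m := by rw [one_div, Real.rpow_inv_natCast_pow hX hm]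
    _ ≤ _ := pow_le_pow_left₀ (by positivity) (Nat.le_ceil _) m

theorem le_natCeil_rpow_one_div_sub_one_pow {X : ℝ} (hX : 0 ≤ X) {d : ℕ} (hd : 2 ≤ d) :
    X ≤ (⌈X ^ ((1 : ℝ) / ((d : ℝ) - 1))⌉₊ : ℝ) ^ (d - 1) := by
  have hd1 : (d : ℝ) - 1 = ((d - 1 : ℕ) : ℝ) := by rw [Nat.cast_sub (by omega), Nat.cast_one]
  rw [hd1]
  exact le_natCeil_rpow_inv_pow hX (by omega)

theorem two_le_natCeil_rpow_one_div_sub_one {X : ℝ} (hX : 1 < X) {d : ℕ} (hd : 2 ≤ d) :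
    2 ≤ ⌈X ^ ((1 : ℝ) / ((d : ℝ) - 1))⌉₊ := by
  by_contra! hk
  have h1 : (⌈X ^ ((1 : ℝ) / ((d : ℝ) - 1))⌉₊ : ℝ) ^ (d - 1) ≤ 1 :=
    pow_le_one₀ (by positivity) (by exact_mod_cast Nat.le_of_lt_succ hk)
  linarith [le_natCeil_rpow_one_div_sub_one_pow (zero_lt_one.trans hX).le hd]

theorem four_mul_sq_add_two_mul_lt_two_pow {d : ℕ} (hd : 11 ≤ d) : 4 * d ^ 2 + 2 * d < 2 ^ d := by
  induction d, hd using Nat.le_induction with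
  | base => norm_num
  | succ d hd ih => rw [pow_succ 2 d]; nlinarith

theorem choose_two_lt_pow {d n k : ℕ} (hd : 2 ≤ d) (hdn : d < n) (hn : n ≤ 2 * d + 1)
    (hk : 2 ≤ k) (hX : 2 * Real.exp 1 * (d + 1) * (n - d) ≤ (k : ℝ) ^ (d - 1)) :
    (n.choose 2 : ℝ) < k ^ (d - 1) := by
  rw [Nat.cast_choose_two]
  have hnd : (d : ℝ) + 1 ≤ n := by exact_mod_cast hdn
  have hn' : (n : ℝ) ≤ 2 * d + 1 := by exact_mod_cast hn
  rcases le_or_gt d 10 with hd10 | hd10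
  · refine lt_of_lt_of_le ?_ hX
    have he : 2.71 < Real.exp 1 := lt_trans (by norm_num) Real.exp_one_gt_d9
    have hd2 : (2 : ℝ) ≤ d := by exact_mod_cast hd
    have hd10' : (d : ℝ) ≤ 10 := by exact_mod_cast hd10
    -- `n ↦ 2e(d+1)(n-d) - n(n-1)/2` is concave, and positive at `n = d + 1` because `d < 4e`
    nlinarith [mul_nonneg (sub_nonneg.2 hnd) (sub_nonneg.2 hn'),
      mul_nonneg (sub_nonneg.2 hnd)
        (by nlinarith : (0 : ℝ) ≤ 4 * Real.exp 1 * (d + 1) - (3 * d + 1)),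
      mul_nonneg (sub_nonneg.2 hd10') (sub_nonneg.2 hd2),
      mul_nonneg (by linarith : (0 : ℝ) ≤ d + 1) (by linarith : (0 : ℝ) ≤ Real.exp 1 - 2.71)]
  · have hpow : (4 * d ^ 2 + 2 * d : ℝ) < 2 ^ d := by
      exact_mod_cast four_mul_sq_add_two_mul_lt_two_pow hd10
    have hsplit : (2 : ℝ) ^ d = 2 * 2 ^ (d - 1) := by rw [← pow_succ']; congr 1; omega
    have hk' : (2 : ℝ) ^ (d - 1) ≤ k ^ (d - 1) :=
      pow_le_pow_left₀ (by norm_num) (by exact_mod_cast hk) _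
    nlinarith

theorem stmt_16_general [Fintype V] [DecidableEq V] (G : SimpleGraph V) [DecidableRel G.Adj]
    (d : ℕ) (hd : 2 ≤ d) (hreg : G.IsRegularOfDegree d)
    (σ : LinearOrder G.edgeSet)
    (L : G.edgeSet → Finset ℝ)
    (hL : ∀ e, (L e).card =
      ⌈(2 * Real.exp 1 * ((d : ℝ) + 1) * ((Fintype.card V : ℝ) - (d : ℝ)))
        ^ ((1 : ℝ) / ((d : ℝ) - 1))⌉₊) :
    ∃ w : G.edgeSet → ℝ, (∀ e, w e ∈ L e) ∧
      ∀ u v : V, u ≠ v → seqColor G σ w u ≠ seqColor G σ w v := by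
  classical
  rcases isEmpty_or_nonempty V with _ | ⟨⟨v₀⟩⟩
  · exact ⟨0, fun e => Sym2.inductionOn e.1 fun a _ => isEmptyElim a, fun u => isEmptyElim u⟩
  have hdn : d < Fintype.card V := hreg v₀ ▸ G.degree_lt_card_verts v₀
  have hnd : (1 : ℝ) ≤ Fintype.card V - d := by rw [le_sub_iff_add_le']; exact_mod_cast hdn
  have hX1 : 1 < 2 * Real.exp 1 * ((d : ℝ) + 1) * ((Fintype.card V : ℝ) - d) := by
    nlinarith [Real.add_one_le_exp 1, mul_le_mul_of_nonneg_left hnd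
      (by positivity : (0 : ℝ) ≤ 2 * Real.exp 1 * ((d : ℝ) + 1))]
  have hX := le_natCeil_rpow_one_div_sub_one_pow (zero_lt_one.trans hX1).le hd
  have hk := two_le_natCeil_rpow_one_div_sub_one hX1 hd
  set k := ⌈(2 * Real.exp 1 * ((d : ℝ) + 1) * ((Fintype.card V : ℝ) - d))
    ^ ((1 : ℝ) / ((d : ℝ) - 1))⌉₊
  have hkpos : (0 : ℝ) < (k : ℝ) ^ (d - 1) := by positivity
  have hLne : ∀ e, (L e).Nonempty := fun e => card_pos.1 (by rw [hL e]; omega)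
  have hp : ∀ j ∈ powersetCard 2 (univ : Finset V),
      (#{w ∈ piFinset L | SeqColorConstOn G σ j w} : ℝ)
        ≤ ((k : ℝ) ^ (d - 1))⁻¹ * #(piFinset L) := fun j hj => by
    rw [inv_mul_eq_div, le_div_iff₀ hkpos]
    exact_mod_cast card_filter_seqColorConstOn_mul_pow_le hreg L (by omega) hL
      (mem_powersetCard.1 hj).2
  suffices ∃ w ∈ piFinset L, ∀ j ∈ powersetCard 2 univ, ¬ SeqColorConstOn G σ j w by
    obtain ⟨w, hw, hgood⟩ := this
    refine ⟨w, mem_piFinset.1 hw, fun u v huv heq => hgood {u, v} ?_ (seqColorConstOn_pair.2 heq)⟩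
    exact mem_powersetCard.2 ⟨subset_univ _, card_pair huv⟩
  rcases le_or_gt (Fintype.card V) (2 * d + 1) with hdense | hsparse
  · refine exists_mem_forall_not_of_card_mul_lt (piFinset_nonempty.2 hLne) hp ?_
    rw [card_powersetCard, card_univ, mul_inv_lt_iff₀ hkpos, one_mul]
    exact choose_two_lt_pow hd hdn hdense hk hX
  · refine exists_mem_piFinset_forall_not_of_exp_mul_le hLne dependsOn_seqColorConstOn hp
      (fun j hj => Nat.le_sub_one_of_lt (card_filter_not_disjoint_edgesMeeting_lt hreg
        (by omega) (mem_powersetCard.1 hj).2)) ?_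
    rw [Nat.cast_pred (Nat.mul_pos (by positivity) (Nat.sub_pos_of_lt hdn)), sub_add_cancel,
      mul_right_comm, ← div_eq_mul_inv, div_le_one hkpos]
    push_cast [Nat.cast_sub hdn.le]
    linarith

/-- If `G` is a nice `d`-regular graph on `n` vertices, `d ≥ 2`, then
`ls_σ^e(G) ≤ ⌈(2e(d+1)(n−d))^{1/(d−1)}⌉`: for every edge ordering and every assignment of
sets of that many reals to the edges, some weighting from the sets gives all vertices
pairwise distinct induced sequences. -/
theorem stmt_16 [Fintype V] [DecidableEq V] (G : SimpleGraph V) [DecidableRel G.Adj]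
    (d : ℕ) (hd : 2 ≤ d) (hreg : G.IsRegularOfDegree d) (hnice : Nice G)
    (σ : LinearOrder G.edgeSet)
    (L : G.edgeSet → Finset ℝ)
    (hL : ∀ e, (L e).card =
      ⌈(2 * Real.exp 1 * ((d : ℝ) + 1) * ((Fintype.card V : ℝ) - (d : ℝ)))
        ^ ((1 : ℝ) / ((d : ℝ) - 1))⌉₊) :
    ∃ w : G.edgeSet → ℝ, (∀ e, w e ∈ L e) ∧
      ∀ u v : V, u ≠ v → seqColor G σ w u ≠ seqColor G σ w v :=
  stmt_16_general G d hd hreg σ L hL
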